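/- arXiv:1502.06436 — 4 statements merged into one kernel-verified Lean document; each statement's English description precedes it below -/
import Mathlib

section
/- Let V ⊆ ℂⁿ be open and connected, let F, G : V → ℂ be holomorphic, and suppose there is a point a ∈ V with all coordinates real and an open neighbourhood W of a in ℝⁿ, with W ⊆ V ∩ ℝⁿ, such that F = G on W. Then F = G on V. -/
/-!
Restricted to ℝⁿ, `F` and `G` agree near `a`, so all their real iterated derivatives at `a` agree.
The real iterated derivatives are the complex ones evaluated on real vectors, and a complex
multilinear map is determined by its values on the real basis vectors; hence the complex
iterated derivatives of `F` and `G` at `a` coincide. Both functions are sums of their Taylor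
series near `a`, so they agree on a neighbourhood of `a`, and by the identity theorem on the
connected set `V`.
-/

open Filter Topology

noncomputable def ofRealPiCLM (ι : Type*) : (ι → ℝ) →L[ℝ] (ι → ℂ) :=
  ContinuousLinearMap.piMap fun _ => Complex.ofRealCLM

@[simp]
theorem ofRealPiCLM_apply {ι : Type*} (x : ι → ℝ) : ofRealPiCLM ι x = fun i => (x i : ℂ) := rfl

theorem ContinuousMultilinearMap.ext_ofRealPiCLM {ι E : Type*} [Finite ι] [NormedAddCommGroup E]
    [NormedSpace ℂ E] {k : ℕ} {f g : ContinuousMultilinearMap ℂ (fun _ : Fin k => ι → ℂ) E}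
    (h : (f.restrictScalars ℝ).compContinuousLinearMap (fun _ => ofRealPiCLM ι) =
      (g.restrictScalars ℝ).compContinuousLinearMap (fun _ => ofRealPiCLM ι)) : f = g := by
  classical
  refine toMultilinearMap_injective <|
    Module.Basis.ext_multilinear (fun _ => Pi.basisFun ℂ ι) fun v => ?_
  have hsingle : ∀ i, ofRealPiCLM ι (Pi.single i 1) = Pi.single i 1 := fun i => by
    ext j
    simp [Pi.single_apply, apply_ite]
  simpa [hsingle] using congr($h fun j => Pi.single (v j) 1)

theorem iteratedFDeriv_comp_ofRealPiCLM {ι E : Type*} [Fintype ι]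
    [NormedAddCommGroup E] [NormedSpace ℂ E] {f : (ι → ℂ) → E} {V : Set (ι → ℂ)}
    (hV : IsOpen V) {k : ℕ} (hf : ContDiffOn ℂ k f V) {x : ι → ℝ} (hx : ofRealPiCLM ι x ∈ V) :
    iteratedFDeriv ℝ k (f ∘ ofRealPiCLM ι) x =
      ((iteratedFDeriv ℂ k f (ofRealPiCLM ι x)).restrictScalars ℝ).compContinuousLinearMap
        fun _ => ofRealPiCLM ι := by
  have hV' : IsOpen (ofRealPiCLM ι ⁻¹' V) := hV.preimage (ofRealPiCLM ι).continuous
  rw [← iteratedFDerivWithin_of_isOpen k hV' hx,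
    (ofRealPiCLM ι).iteratedFDerivWithin_comp_right (hf.restrict_scalars ℝ) hV.uniqueDiffOn
      hV'.uniqueDiffOn hx le_rfl, iteratedFDerivWithin_of_isOpen k hV hx,
    ← (hf.contDiffAt (hV.mem_nhds hx)).restrictScalars_iteratedFDeriv (𝕜 := ℝ)]
  rfl

theorem AnalyticAt.eventuallyEq_of_iteratedFDeriv_eq {𝕜 E F : Type*} [NontriviallyNormedField 𝕜]
    [CharZero 𝕜] [NormedAddCommGroup E] [NormedSpace 𝕜 E] [NormedAddCommGroup F]
    [NormedSpace 𝕜 F] [CompleteSpace F] {f g : E → F} {x : E} (hf : AnalyticAt 𝕜 f x)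
    (hg : AnalyticAt 𝕜 g x)
    (h : ∀ k, iteratedFDeriv 𝕜 k f x = iteratedFDeriv 𝕜 k g x) : f =ᶠ[𝓝 x] g := by
  obtain ⟨p, r, hp⟩ := hf
  obtain ⟨q, s, hq⟩ := hg
  filter_upwards [Metric.eball_mem_nhds x (lt_min hp.r_pos hq.r_pos)] with y hy
  have hy' : y - x ∈ Metric.eball 0 (min r s) := by
    simpa [edist_eq_enorm_sub] using hy
  have hfy := hp.hasSum_iteratedFDeriv (Metric.eball_subset_eball (min_le_left r s) hy')
  have hgy := hq.hasSum_iteratedFDeriv (Metric.eball_subset_eball (min_le_right r s) hy')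
  simp only [h, add_sub_cancel] at hfy hgy
  exact hfy.unique hgy

theorem stmt_1_general (n : ℕ) (V : Set (Fin n → ℂ)) (hV : IsOpen V) (hVc : IsPreconnected V)
    (F G : (Fin n → ℂ) → ℂ) (hF : AnalyticOn ℂ F V) (hG : AnalyticOn ℂ G V)
    (a : Fin n → ℝ) (ha : (fun i => (a i : ℂ)) ∈ V)
    (W : Set (Fin n → ℝ)) (hW : IsOpen W) (haW : a ∈ W)
    (hFG : ∀ x ∈ W, F (fun i => (x i : ℂ)) = G (fun i => (x i : ℂ))) :
    Set.EqOn F G V := by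
  have hF' := hV.analyticOn_iff_analyticOnNhd.1 hF
  have hG' := hV.analyticOn_iff_analyticOnNhd.1 hG
  have hreal : F ∘ ofRealPiCLM (Fin n) =ᶠ[𝓝 a] G ∘ ofRealPiCLM (Fin n) :=
    eventually_of_mem (hW.mem_nhds haW) hFG
  have hderiv (k : ℕ) :
      iteratedFDeriv ℂ k F (ofRealPiCLM _ a) = iteratedFDeriv ℂ k G (ofRealPiCLM _ a) := by
    apply ContinuousMultilinearMap.ext_ofRealPiCLM
    rw [← iteratedFDeriv_comp_ofRealPiCLM hV (hF.contDiffOn hV.uniqueDiffOn) ha,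
      ← iteratedFDeriv_comp_ofRealPiCLM hV (hG.contDiffOn hV.uniqueDiffOn) ha,
      (hreal.iteratedFDeriv ℝ k).eq_of_nhds]
  exact hF'.eqOn_of_preconnected_of_eventuallyEq hG' hVc ha
    ((hF' _ ha).eventuallyEq_of_iteratedFDeriv_eq (hG' _ ha) hderiv)

theorem stmt_1 (n : ℕ) (V : Set (Fin n → ℂ)) (hV : IsOpen V) (hVc : IsPreconnected V)
    (F G : (Fin n → ℂ) → ℂ) (hF : AnalyticOn ℂ F V) (hG : AnalyticOn ℂ G V)
    (a : Fin n → ℝ) (ha : (fun i => (a i : ℂ)) ∈ V)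
    (W : Set (Fin n → ℝ)) (hW : IsOpen W) (haW : a ∈ W)
    (hWV : ∀ x ∈ W, (fun i => (x i : ℂ)) ∈ V)
    (hFG : ∀ x ∈ W, F (fun i => (x i : ℂ)) = G (fun i => (x i : ℂ))) :
    Set.EqOn F G V :=
  stmt_1_general n V hV hVc F G hF hG a ha W hW haW hFG
end

section
/- Let f : ℝᵐ × ℝⁿ → ℝⁿ be real analytic at (a, b) with f(a, b) = 0, and suppose the partial derivative of f with respect to the second variable at (a, b), as a linear map ℝⁿ → ℝⁿ, is invertible. Then there exist a neighbourhood V of a and a real analytic function φ : V → ℝⁿ with φ(a) = b such that f(x, φ(x)) = 0 for all x ∈ V; moreover, locally the zero set of f equals the graph of φ. -/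
/-!
The map `(x, y) ↦ (f (x, y), x)` has invertible derivative at `(a, b)`, so by the analytic inverse
function theorem its local inverse is analytic. The implicit function `x ↦ φ x` is the second
component of that inverse at `(0, x)`, hence analytic, and the differentiable implicit function
theorem already identifies its graph with the zero set of `f` near `(a, b)`.
-/

open Set Filter Topology

variable {𝕜 : Type*} [NontriviallyNormedField 𝕜]
  {E : Type*} [NormedAddCommGroup E] [NormedSpace 𝕜 E] [CompleteSpace E]
  {F : Type*} [NormedAddCommGroup F] [NormedSpace 𝕜 F] [CompleteSpace F]
  {G : Type*} [NormedAddCommGroup G] [NormedSpace 𝕜 G] [CompleteSpace G]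

namespace ImplicitFunctionData

theorem analyticAt_implicitFunction (φ : ImplicitFunctionData 𝕜 E F G)
    (hleft : AnalyticAt 𝕜 φ.leftFun φ.pt) (hright : AnalyticAt 𝕜 φ.rightFun φ.pt) :
    AnalyticAt 𝕜 (φ.implicitFunction (φ.leftFun φ.pt)) (φ.rightFun φ.pt) := by
  have hsymm : AnalyticAt 𝕜 φ.toOpenPartialHomeomorph.symm (φ.prodFun φ.pt) :=
    φ.toOpenPartialHomeomorph.analyticAt_symm' φ.pt_mem_toOpenPartialHomeomorph_source
      (hleft.prod hright) φ.hasStrictFDerivAt.hasFDerivAt.fderiv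
  exact hsymm.comp (f := fun y ↦ (φ.leftFun φ.pt, y)) (analyticAt_const.prod analyticAt_id)

end ImplicitFunctionData

namespace HasStrictFDerivAt

theorem analyticAt_implicitFunctionOfProdDomain {f : E × G → F} {f' : E × G →L[𝕜] F} {u : E × G}
    (hf' : HasStrictFDerivAt f f' u) (hf'₂ : (f' ∘L .inr 𝕜 E G).IsInvertible)
    (hf : AnalyticAt 𝕜 f u) :
    AnalyticAt 𝕜 (hf'.implicitFunctionOfProdDomain hf'₂) u.1 :=
  analyticAt_snd.comp <|
    (hf'.implicitFunctionDataOfProdDomain hf'₂).analyticAt_implicitFunction hf analyticAt_fst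

end HasStrictFDerivAt

theorem stmt_11 (m n : ℕ)
    (f : (Fin m → ℝ) × (Fin n → ℝ) → (Fin n → ℝ))
    (a : Fin m → ℝ) (b : Fin n → ℝ)
    (hf : AnalyticAt ℝ f (a, b)) (hfab : f (a, b) = 0)
    (e : (Fin n → ℝ) ≃L[ℝ] (Fin n → ℝ))
    (he : ∀ v : Fin n → ℝ, e v = fderiv ℝ f (a, b) (0, v)) :
    ∃ V : Set (Fin m → ℝ), ∃ W : Set (Fin n → ℝ), IsOpen V ∧ IsOpen W ∧
      a ∈ V ∧ b ∈ W ∧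
      ∃ φ : (Fin m → ℝ) → (Fin n → ℝ), AnalyticOn ℝ φ V ∧ φ a = b ∧
        (∀ x ∈ V, φ x ∈ W) ∧
        ∀ x ∈ V, ∀ y ∈ W, (f (x, y) = 0 ↔ y = φ x) := by
  have hf' : HasStrictFDerivAt f (fderiv ℝ f (a, b)) (a, b) := hf.hasStrictFDerivAt
  have hf'₂ : (fderiv ℝ f (a, b) ∘L .inr ℝ _ _).IsInvertible :=
    ⟨e, ContinuousLinearMap.ext fun v ↦ he v⟩
  set φ := hf'.implicitFunctionOfProdDomain hf'₂
  have hφ : AnalyticAt ℝ φ a := hf'.analyticAt_implicitFunctionOfProdDomain hf'₂ hf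
  have hgraph := hf'.eventually_apply_eq_iff_implicitFunctionOfProdDomain hf'₂
  have hφa : φ a = b := hgraph.self_of_nhds.mp rfl
  rw [hfab] at hgraph
  obtain ⟨U, W, hU, haU, hW, hbW, hUW⟩ := mem_nhds_prod_iff'.mp hgraph
  have hnhds : U ∩ φ ⁻¹' W ∩ {x | AnalyticAt ℝ φ x} ∈ 𝓝 a :=
    inter_mem (inter_mem (hU.mem_nhds haU)
      (hφ.continuousAt.preimage_mem_nhds (hφa ▸ hW.mem_nhds hbW))) hφ.eventually_analyticAt
  obtain ⟨V, hVsub, hV, haV⟩ := mem_nhds_iff.mp hnhds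
  refine ⟨V, W, hV, hW, haV, hbW, φ, fun x hx ↦ (hVsub hx).2.analyticWithinAt, hφa,
    fun x hx ↦ (hVsub hx).1.2, fun x hx y hy ↦ ?_⟩
  exact (hUW (mk_mem_prod (hVsub hx).1.1 hy)).trans eq_comm
end

section
/- Let V ⊆ ℂⁿ be open and connected and F : V → ℂ holomorphic. If F vanishes on a set W ⊆ V that contains a nonempty open subset of ℝⁿ (with ℝⁿ identified with the real points of ℂⁿ), then F vanishes identically on V. -/
theorem stmt_12 (n : ℕ) (V : Set (Fin n → ℂ)) (hV : IsOpen V) (hVc : IsPreconnected V)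
    (F : (Fin n → ℂ) → ℂ) (hF : AnalyticOn ℂ F V)
    (D : Set (Fin n → ℂ)) (hD : IsOpen D)
    (hsub : {z ∈ D | ∀ i, (z i).im = 0} ⊆ V)
    (hne : {z ∈ D | ∀ i, (z i).im = 0}.Nonempty)
    (hzero : ∀ z ∈ D, (∀ i, (z i).im = 0) → F z = 0) :
    Set.EqOn F 0 V := by
  rw [hV.analyticOn_iff_analyticOnNhd] at hF
  obtain ⟨z₀, hz₀D, hz₀re⟩ := hne
  have hz₀V : z₀ ∈ V := hsub ⟨hz₀D, hz₀re⟩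
  obtain ⟨ε, hε, hball⟩ : ∃ ε > 0, Metric.ball z₀ ε ⊆ D ∩ V := by
    rcases Metric.isOpen_iff.1 (hD.inter hV) z₀ ⟨hz₀D, hz₀V⟩ with ⟨ε, hε, h⟩
    exact ⟨ε, hε, h⟩
  -- key induction: F vanishes on points of the ball whose coordinates ≥ k are real
  have key : ∀ k : ℕ, ∀ z ∈ Metric.ball z₀ ε,
      (∀ i : Fin n, k ≤ (i : ℕ) → (z i).im = 0) → F z = 0 := by
    intro k
    induction k with
    | zero =>
      intro z hz hre
      exact hzero z (hball hz).1 fun i => hre i (Nat.zero_le _)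
    | succ k ih =>
      intro z hz hre
      by_cases hk : k < n
      · set j : Fin n := ⟨k, hk⟩
        set g : ℂ → ℂ := fun w => F (Function.update z j w) with hg
        have hmem : ∀ w ∈ Metric.ball (z₀ j) ε,
            Function.update z j w ∈ Metric.ball z₀ ε := by
          intro w hw
          rw [Metric.mem_ball, dist_pi_lt_iff hε]
          intro i
          rcases eq_or_ne i j with rfl | hij
          · simpa [Function.update_self] using hw
          · rw [Function.update_of_ne hij]
            exact lt_of_le_of_lt (dist_le_pi_dist z z₀ i) hz
        have hgd : AnalyticOnNhd ℂ g (Metric.ball (z₀ j) ε) := by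
          apply DifferentiableOn.analyticOnNhd _ Metric.isOpen_ball
          intro w hw
          apply DifferentiableAt.differentiableWithinAt
          have h1 : DifferentiableAt ℂ F (Function.update z j w) :=
            (hF _ (hball (hmem w hw)).2).differentiableAt
          exact h1.comp w (hasFDerivAt_update z w).differentiableAt
        have hfreq : ∃ᶠ w in nhdsWithin (z₀ j) {(z₀ j)}ᶜ, g w = 0 := by
          have htend : Filter.Tendsto (fun m : ℕ => z₀ j + ((ε / (m + 2) : ℝ) : ℂ))
              Filter.atTop (nhdsWithin (z₀ j) {(z₀ j)}ᶜ) := by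
            rw [tendsto_nhdsWithin_iff]
            constructor
            · have : Filter.Tendsto (fun m : ℕ => ((ε / (m + 2) : ℝ) : ℂ)) Filter.atTop (nhds 0) := by
                rw [← Complex.ofReal_zero]
                apply Filter.Tendsto.comp Complex.continuous_ofReal.continuousAt
                apply Filter.Tendsto.div_atTop tendsto_const_nhds
                exact Filter.tendsto_atTop_add_const_right _ 2 tendsto_natCast_atTop_atTop
              simpa using tendsto_const_nhds.add this
            · filter_upwards with m
              simp only [Set.mem_compl_iff, Set.mem_singleton_iff, add_eq_left]
              intro h
              have : (ε / (m + 2) : ℝ) = 0 := by exact_mod_cast h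
              have h2 : (0:ℝ) < ε / (m + 2) := by positivity
              linarith
          apply htend.frequently
          apply Filter.Frequently.of_forall
          intro m
          have hdist : ((ε / (m + 2) : ℝ) : ℂ) ∈ Metric.ball (0 : ℂ) ε := by
            rw [Metric.mem_ball, dist_zero_right, Complex.norm_real, Real.norm_eq_abs,
              abs_of_pos (by positivity)]
            rw [div_lt_iff₀ (by positivity)]
            nlinarith
          have hw : z₀ j + ((ε / (m + 2) : ℝ) : ℂ) ∈ Metric.ball (z₀ j) ε := by
            simpa [Metric.mem_ball, dist_self_add_left] using
              (by simpa [Metric.mem_ball, dist_zero_right] using hdist : ‖((ε / (m + 2) : ℝ) : ℂ)‖ < ε)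
          apply ih _ (hmem _ hw)
          intro i hi
          rcases eq_or_ne i j with rfl | hij
          · rw [Function.update_self, Complex.add_im, hz₀re j, Complex.ofReal_im, add_zero]
          · rw [Function.update_of_ne hij]
            apply hre
            rcases Nat.lt_or_ge (i : ℕ) (k + 1) with h | h
            · exfalso
              have : (i : ℕ) = k := le_antisymm (Nat.lt_succ_iff.1 h) hi
              exact hij (Fin.ext this)
            · exact h
        have hzj : z j ∈ Metric.ball (z₀ j) ε :=
          lt_of_le_of_lt (dist_le_pi_dist z z₀ j) hz
        have := hgd.eqOn_zero_of_preconnected_of_frequently_eq_zero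
          (convex_ball (z₀ j) ε).isPreconnected (Metric.mem_ball_self hε) hfreq hzj
        simpa [hg, Function.update_eq_self] using this
      · -- k ≥ n: the hypothesis already covers all coordinates
        apply ih z hz
        intro i hi
        exact absurd (lt_of_le_of_lt hi i.isLt) (by omega)
  have hev : F =ᶠ[nhds z₀] 0 := by
    filter_upwards [Metric.ball_mem_nhds z₀ hε] with z hz
    exact key n z hz fun i hi => absurd (lt_of_le_of_lt hi i.isLt) (lt_irrefl n)
  exact hF.eqOn_zero_of_preconnected_of_eventuallyEq_zero hVc hz₀V hev
end

section
/- Let U ⊆ ℝᵐ × ℝⁿ be open, f : U → ℝⁿ real analytic, and assume that for every (x,y) ∈ U the partial differential of f in the y-variables at (x,y) is an invertible linear map ℝⁿ → ℝⁿ. Suppose further that there is an open set V ⊆ ℝᵐ and a function φ : V → ℝⁿ such that {(x,y) ∈ U : f(x,y) = 0} = graph(φ). Then φ is real analytic on V. -/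
/-!
Near a point `(x₀, φ x₀)` of the zero set, the implicit function theorem gives a local solution `ψ`
of `f (x, ψ x) = 0` with `ψ x₀ = φ x₀`. It is a component of the local inverse of
`(x, y) ↦ (f (x, y), x)`, which is analytic by the analytic inverse function theorem. As `ψ` is
continuous, `(x, ψ x)` stays in `U` for `x` near `x₀`, so it lies on the graph of `φ` and `φ = ψ`
near `x₀`.
-/

open Filter Topology

variable {𝕜 : Type*} [NontriviallyNormedField 𝕜]

theorem ImplicitFunctionData.analyticAt_implicitFunction_s16
    {E F G : Type*} [NormedAddCommGroup E] [NormedSpace 𝕜 E] [CompleteSpace E]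
    [NormedAddCommGroup F] [NormedSpace 𝕜 F] [CompleteSpace F]
    [NormedAddCommGroup G] [NormedSpace 𝕜 G] [CompleteSpace G]
    (φ : ImplicitFunctionData 𝕜 E F G) (hl : AnalyticAt 𝕜 φ.leftFun φ.pt)
    (hr : AnalyticAt 𝕜 φ.rightFun φ.pt) :
    AnalyticAt 𝕜 φ.implicitFunction.uncurry (φ.prodFun φ.pt) := by
  obtain ⟨e, he⟩ := φ.isInvertible_fderiv_prodFun
  rw [φ.implicitFunction_def, Function.uncurry_curry]
  exact φ.toOpenPartialHomeomorph.analyticAt_symm' φ.pt_mem_toOpenPartialHomeomorph_source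
    (hl.prod hr) he.symm

variable {E₁ E₂ F : Type*} [NormedAddCommGroup E₁] [NormedSpace 𝕜 E₁] [CompleteSpace E₁]
  [NormedAddCommGroup E₂] [NormedSpace 𝕜 E₂] [CompleteSpace E₂]
  [NormedAddCommGroup F] [NormedSpace 𝕜 F] [CompleteSpace F]
  {f : E₁ × E₂ → F} {u : E₁ × E₂}

theorem HasStrictFDerivAt.analyticAt_implicitFunctionOfProdDomain_s16 {f'u : E₁ × E₂ →L[𝕜] F}
    (dfu : HasStrictFDerivAt f f'u u) (if₂u : (f'u ∘L .inr 𝕜 E₁ E₂).IsInvertible)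
    (hf : AnalyticAt 𝕜 f u) :
    AnalyticAt 𝕜 (dfu.implicitFunctionOfProdDomain if₂u) u.1 := by
  set φ := dfu.implicitFunctionDataOfProdDomain if₂u
  have : AnalyticAt 𝕜 φ.implicitFunction.uncurry (f u, u.1) := by
    simpa [φ] using φ.analyticAt_implicitFunction_s16 hf analyticAt_fst
  exact analyticAt_snd.comp (this.comp (analyticAt_const.prod analyticAt_id))

theorem AnalyticAt.analyticAt_of_levelSet_subset_graph {φ : E₁ → E₂} {x₀ : E₁}
    (hf : AnalyticAt 𝕜 f (x₀, φ x₀))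
    (if₂ : (fderiv 𝕜 f (x₀, φ x₀) ∘L .inr 𝕜 E₁ E₂).IsInvertible)
    (hgraph : ∀ᶠ p in 𝓝 (x₀, φ x₀), f p = f (x₀, φ x₀) → p.2 = φ p.1) :
    AnalyticAt 𝕜 φ x₀ := by
  set dfu := hf.hasStrictFDerivAt
  set ψ := dfu.implicitFunctionOfProdDomain if₂
  have hψ : Tendsto (fun x => (x, ψ x)) (𝓝 x₀) (𝓝 (x₀, φ x₀)) :=
    tendsto_id.prodMk_nhds (dfu.tendsto_implicitFunctionOfProdDomain if₂)
  refine (dfu.analyticAt_implicitFunctionOfProdDomain_s16 if₂ hf).congr ?_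
  filter_upwards [hψ.eventually hgraph, dfu.eventually_apply_implicitFunctionOfProdDomain if₂]
    with x hx hfx
  exact hx hfx

theorem stmt_16_general (m n : ℕ) (U : Set ((Fin m → ℝ) × (Fin n → ℝ))) (hU : IsOpen U)
    (f : (Fin m → ℝ) × (Fin n → ℝ) → (Fin n → ℝ)) (hf : AnalyticOn ℝ f U)
    (hinv : ∀ p ∈ U, ∃ e : (Fin n → ℝ) ≃L[ℝ] (Fin n → ℝ),
      ∀ v : Fin n → ℝ, e v = fderiv ℝ f p (0, v))
    (V : Set (Fin m → ℝ))
    (φ : (Fin m → ℝ) → (Fin n → ℝ))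
    (hgraph : {p ∈ U | f p = 0} = (fun x => (x, φ x)) '' V) :
    AnalyticOn ℝ φ V := by
  refine fun x₀ hx₀ => AnalyticAt.analyticWithinAt ?_
  obtain ⟨hu, hfu⟩ : (x₀, φ x₀) ∈ {p ∈ U | f p = 0} := hgraph ▸ ⟨x₀, hx₀, rfl⟩
  obtain ⟨e, he⟩ := hinv _ hu
  refine (hf.analyticAt (hU.mem_nhds hu)).analyticAt_of_levelSet_subset_graph
    ⟨e, ContinuousLinearMap.ext he⟩ ?_
  filter_upwards [hU.mem_nhds hu] with p hp hfp
  obtain ⟨x, -, rfl⟩ : p ∈ (fun x => (x, φ x)) '' V := hgraph ▸ ⟨hp, hfp.trans hfu⟩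
  rfl

theorem stmt_16 (m n : ℕ) (U : Set ((Fin m → ℝ) × (Fin n → ℝ))) (hU : IsOpen U)
    (f : (Fin m → ℝ) × (Fin n → ℝ) → (Fin n → ℝ)) (hf : AnalyticOn ℝ f U)
    (hinv : ∀ p ∈ U, ∃ e : (Fin n → ℝ) ≃L[ℝ] (Fin n → ℝ),
      ∀ v : Fin n → ℝ, e v = fderiv ℝ f p (0, v))
    (V : Set (Fin m → ℝ)) (hV : IsOpen V)
    (φ : (Fin m → ℝ) → (Fin n → ℝ))
    (hgraph : {p ∈ U | f p = 0} = (fun x => (x, φ x)) '' V) :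
    AnalyticOn ℝ φ V :=
  stmt_16_general m n U hU f hf hinv V φ hgraph
end
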